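/- arXiv:2011.04914 — 3 statements merged into one kernel-verified Lean document; each statement's English description precedes it below -/
import Mathlib

section
/- For an odd prime p, the edge-connectivity of the unit graph G(Z_{2p}) equals p-1. -/
open SimpleGraph Finset
open scoped Classical

/-- The unit graph of a commutative ring: distinct `x, y` adjacent iff `x + y` is a unit. -/
def unitGraphR (R : Type*) [CommRing R] : SimpleGraph R where
  Adj x y := x ≠ y ∧ IsUnit (x + y)
  symm := ⟨fun x y ⟨h1, h2⟩ => ⟨h1.symm, by rwa [add_comm]⟩⟩
  loopless := ⟨fun x ⟨h, _⟩ => h rfl⟩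

/-- The unit graph of `ZMod n`. -/
def unitGraph (n : ℕ) : SimpleGraph (ZMod n) := unitGraphR (ZMod n)

/-- The number of edges of `G` with one endpoint in `W` and the other outside `W`. -/
noncomputable def cutSize {V : Type*} [Fintype V] (G : SimpleGraph V) (W : Finset V) : ℕ :=
  (G.edgeFinset.filter (fun e => (∃ x ∈ e, x ∈ W) ∧ (∃ x ∈ e, x ∉ W))).card

/-- The edge-connectivity of `G`: minimum cut size over nonempty proper vertex subsets. -/
noncomputable def edgeConn {V : Type*} [Fintype V] (G : SimpleGraph V) : ℕ :=
  sInf {n | ∃ W : Finset V, W.Nonempty ∧ W ≠ Finset.univ ∧ n = cutSize G W}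

/-- The incidence matrix of `G` over `F_2`, rows indexed by vertices, columns by edges. -/
noncomputable def incMat {V : Type*} [Fintype V] (G : SimpleGraph V) :
    Matrix V G.edgeFinset (ZMod 2) :=
  fun v e => if v ∈ (e : Sym2 V) then 1 else 0

/-- The binary code generated by the rows of the incidence matrix of `G`. -/
noncomputable def rowCode {V : Type*} [Fintype V] (G : SimpleGraph V) :
    Submodule (ZMod 2) (G.edgeFinset → ZMod 2) :=
  Submodule.span (ZMod 2) (Set.range (incMat G))

/-- The minimum Hamming weight of a nonzero codeword of the incidence-matrix code of `G`. -/
noncomputable def minDist {V : Type*} [Fintype V] (G : SimpleGraph V) : ℕ :=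
  sInf {w | ∃ c ∈ rowCode G, c ≠ 0 ∧ w = hammingNorm c}

/-!
By the Chinese remainder theorem `ZMod (2 * p) ≃+* ZMod 2 × ZMod p`, and in `ZMod 2 × F`, for a
field `F`, the sum `(c, x) + (d, y)` is a unit iff `c ≠ d` and `x + y ≠ 0`. So the unit graph is
`K_{q,q}` minus a perfect matching, `q = |F|`; it is `(q - 1)`-regular, so a single vertex is cut
off by `q - 1` edges. Conversely, passing to the complement, a cut `W` may be assumed to have at
most `q` vertices, `a` on one side and `b` on the other. A vertex of `W` on the first side has at
most `b` neighbours inside `W`, hence at least `q - 1 - b` outside, so at least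
`a (q - 1 - b) + b (q - 1 - a) ≥ q - 1` edges leave `W` as soon as `q ≥ 3`.
-/

lemma Finset.map_equiv_ne_univ {α β : Type*} [Fintype α] [Fintype β] (f : α ≃ β)
    {s : Finset α} (hs : s ≠ univ) : s.map f.toEmbedding ≠ univ := by
  rwa [← map_univ_equiv f, Ne, map_inj]

section Cuts

variable {V : Type*} [Fintype V] (G : SimpleGraph V)

lemma cutSize_eq_card_interedges (W : Finset V) : cutSize G W = #(G.interedges W Wᶜ) := by
  have hinj : Set.InjOn (fun q : V × V => s(q.1, q.2)) (G.interedges W Wᶜ) := by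
    rintro ⟨a, b⟩ hab ⟨c, d⟩ hcd h
    simp only [mem_coe, mem_interedges_iff, mem_compl] at hab hcd
    simp only [Sym2.eq_iff] at h
    grind
  rw [cutSize, ← card_image_of_injOn hinj]
  congr 1
  ext e
  induction e using Sym2.ind with
  | _ a b =>
    simp only [mem_filter, mem_edgeFinset, mem_edgeSet, Sym2.mem_iff, mem_image,
      mem_interedges_iff, mem_compl, Prod.exists, Sym2.eq_iff]
    grind [G.adj_symm]

lemma cutSize_compl [DecidableEq V] (W : Finset V) : cutSize G Wᶜ = cutSize G W := by
  simp only [cutSize, mem_compl, not_not, and_comm]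

lemma cutSize_eq_sum_card_sdiff [DecidableEq V] (W : Finset V) :
    cutSize G W = ∑ v ∈ W, #(G.neighborFinset v \ W) := by
  rw [cutSize_eq_card_interedges, interedges_def, card_filter, sum_product]
  refine sum_congr rfl fun v _ => ?_
  rw [← card_filter]
  congr 1
  ext u
  simp [and_comm]

lemma cutSize_singleton (v : V) : cutSize G {v} = G.degree v := by
  rw [cutSize_eq_sum_card_sdiff, sum_singleton, sdiff_singleton_eq_erase,
    erase_eq_of_notMem (G.notMem_neighborFinset_self v), card_neighborFinset_eq_degree]

lemma edgeConn_le_cutSize {W : Finset V} (hW : W.Nonempty) (hW' : W ≠ univ) :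
    edgeConn G ≤ cutSize G W :=
  Nat.sInf_le ⟨W, hW, hW', rfl⟩

lemma le_edgeConn [Nontrivial V] {k : ℕ}
    (h : ∀ W : Finset V, W.Nonempty → W ≠ univ → k ≤ cutSize G W) : k ≤ edgeConn G := by
  obtain ⟨v⟩ := ‹Nontrivial V›.to_nonempty
  refine le_csInf ⟨_, {v}, singleton_nonempty v, singleton_ne_univ v, rfl⟩ ?_
  rintro _ ⟨W, hW, hW', rfl⟩
  exact h W hW hW'

variable {G}

lemma cutSize_map {V' : Type*} [Fintype V'] {G' : SimpleGraph V'} (e : G ≃g G') (W : Finset V) :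
    cutSize G' (W.map e.toEquiv.toEmbedding) = cutSize G W := by
  rw [cutSize_eq_card_interedges, cutSize_eq_card_interedges]
  rcases e with ⟨f, hf⟩
  have hf' {a b : V'} : G.Adj (f.symm a) (f.symm b) ↔ G'.Adj a b := by
    rw [← hf, f.apply_symm_apply, f.apply_symm_apply]
  refine card_nbij' (Prod.map f.symm f.symm) (Prod.map f f) ?_ ?_ ?_ ?_ <;>
    intro ⟨a, b⟩ <;> simp [mem_interedges_iff, mem_map_equiv, hf, hf']

lemma edgeConn_congr {V' : Type*} [Fintype V'] {G' : SimpleGraph V'} (e : G ≃g G') :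
    edgeConn G = edgeConn G' := by
  unfold edgeConn
  congr 1
  ext n
  constructor
  · rintro ⟨W, hW, hW', rfl⟩
    exact ⟨_, hW.map, map_equiv_ne_univ e.toEquiv hW', (cutSize_map e W).symm⟩
  · rintro ⟨W, hW, hW', rfl⟩
    exact ⟨_, hW.map, map_equiv_ne_univ e.symm.toEquiv hW', (cutSize_map e.symm W).symm⟩

end Cuts

lemma sub_one_le_mul_sub_add_mul_sub {q a b : ℕ} (hq : 3 ≤ q) (hpos : 0 < a + b)
    (hle : a + b ≤ q) : q - 1 ≤ a * (q - 1 - b) + b * (q - 1 - a) := by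
  rcases Nat.eq_zero_or_pos a with rfl | ha
  · simpa using Nat.le_mul_of_pos_left (q - 1) hpos
  rcases Nat.eq_zero_or_pos b with rfl | hb
  · simpa using Nat.le_mul_of_pos_left (q - 1) ha
  obtain ⟨a, rfl⟩ : ∃ a', a = a' + 1 := ⟨a - 1, by omega⟩
  obtain ⟨b, rfl⟩ : ∃ b', b = b' + 1 := ⟨b - 1, by omega⟩
  obtain ⟨d, rfl⟩ : ∃ d, q = a + b + d + 2 := ⟨q - a - b - 2, by omega⟩
  rw [show a + b + d + 2 - 1 = a + b + d + 1 from rfl,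
    show a + b + d + 1 - (b + 1) = a + d by omega, show a + b + d + 1 - (a + 1) = b + d by omega]
  nlinarith [Nat.le_mul_self a, Nat.le_mul_self b]

lemma sum_comp_fst_zmod_two {β M : Type*} [AddCommMonoid M] (W : Finset (ZMod 2 × β))
    (f : ZMod 2 → M) :
    ∑ v ∈ W, f v.1 = #{v ∈ W | v.1 = 0} • f 0 + #{v ∈ W | v.1 = 1} • f 1 := by
  rw [← sum_fiberwise' W Prod.fst f]
  simp only [sum_const]
  exact Fin.sum_univ_two _

def unitGraphRIso {R S : Type*} [CommRing R] [CommRing S] (e : R ≃+* S) :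
    unitGraphR R ≃g unitGraphR S where
  toEquiv := e.toEquiv
  map_rel_iff' {x y} := by
    change e x ≠ e y ∧ IsUnit (e x + e y) ↔ x ≠ y ∧ IsUnit (x + y)
    rw [e.injective.ne_iff, ← map_add, isUnit_map_iff]

section ZModTwoProd

variable {F : Type*} [Field F]

lemma unitGraphR_zmod_two_prod_adj {u v : ZMod 2 × F} :
    (unitGraphR (ZMod 2 × F)).Adj u v ↔ v.1 = u.1 + 1 ∧ u.2 + v.2 ≠ 0 := by
  have hsum : ∀ a b : ZMod 2, a + b ≠ 0 ↔ b = a + 1 := by decide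
  have hne : ∀ a : ZMod 2, a ≠ a + 1 := by decide
  change u ≠ v ∧ IsUnit (u + v) ↔ _
  rw [Prod.isUnit_iff, isUnit_iff_ne_zero, isUnit_iff_ne_zero, Prod.fst_add, Prod.snd_add, hsum]
  exact and_iff_right_of_imp fun ⟨h, _⟩ huv => hne v.1 (huv ▸ h)

variable [Fintype F]

lemma unitGraphR_zmod_two_prod_neighborFinset (v : ZMod 2 × F) :
    (unitGraphR (ZMod 2 × F)).neighborFinset v =
      (univ.erase (-v.2)).map ⟨Prod.mk (v.1 + 1), Prod.mk_right_injective _⟩ := by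
  ext ⟨d, y⟩
  simp +contextual [unitGraphR_zmod_two_prod_adj, add_eq_zero_iff_neg_eq, eq_comm, iff_def]

lemma unitGraphR_zmod_two_prod_degree (v : ZMod 2 × F) :
    (unitGraphR (ZMod 2 × F)).degree v = Fintype.card F - 1 := by
  rw [← card_neighborFinset_eq_degree, unitGraphR_zmod_two_prod_neighborFinset, card_map,
    card_erase_of_mem (mem_univ _), card_univ]

lemma le_card_neighborFinset_sdiff (W : Finset (ZMod 2 × F)) (v : ZMod 2 × F) :
    Fintype.card F - 1 - #{u ∈ W | u.1 = v.1 + 1} ≤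
      #((unitGraphR (ZMod 2 × F)).neighborFinset v \ W) := by
  rw [card_sdiff, card_neighborFinset_eq_degree, unitGraphR_zmod_two_prod_degree]
  refine Nat.sub_le_sub_left (card_le_card fun u hu => ?_) _
  rw [mem_inter, mem_neighborFinset, unitGraphR_zmod_two_prod_adj] at hu
  exact mem_filter.2 ⟨hu.1, hu.2.1⟩

lemma le_cutSize_of_card_le (hF : 3 ≤ Fintype.card F) {W : Finset (ZMod 2 × F)}
    (hW : W.Nonempty) (hcard : #W ≤ Fintype.card F) :
    Fintype.card F - 1 ≤ cutSize (unitGraphR (ZMod 2 × F)) W := by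
  have hab : #W = #{v ∈ W | v.1 = 0} + #{v ∈ W | v.1 = 1} := by
    simpa using sum_comp_fst_zmod_two W fun _ => (1 : ℕ)
  have h1 : (1 : ZMod 2) + 1 = 0 := by decide
  set q := Fintype.card F
  set a := #{v ∈ W | v.1 = 0}
  set b := #{v ∈ W | v.1 = 1}
  calc q - 1 ≤ a * (q - 1 - b) + b * (q - 1 - a) :=
        sub_one_le_mul_sub_add_mul_sub hF (hab ▸ hW.card_pos) (hab ▸ hcard)
    _ = ∑ v ∈ W, (q - 1 - #{u ∈ W | u.1 = v.1 + 1}) := by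
        rw [sum_comp_fst_zmod_two W fun c => q - 1 - #{u ∈ W | u.1 = c + 1}, zero_add, h1,
          smul_eq_mul, smul_eq_mul]
    _ ≤ ∑ v ∈ W, #((unitGraphR (ZMod 2 × F)).neighborFinset v \ W) :=
        sum_le_sum fun v _ => le_card_neighborFinset_sdiff W v
    _ = cutSize (unitGraphR (ZMod 2 × F)) W := (cutSize_eq_sum_card_sdiff _ W).symm

end ZModTwoProd

theorem edgeConn_unitGraphR_zmod_two_prod {F : Type*} [Field F] [Fintype F]
    (hF : 3 ≤ Fintype.card F) :
    edgeConn (unitGraphR (ZMod 2 × F)) = Fintype.card F - 1 := by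
  refine le_antisymm ?_ (le_edgeConn _ fun W hW hW' => ?_)
  · calc edgeConn _ ≤ cutSize (unitGraphR (ZMod 2 × F)) {(0, 0)} :=
          edgeConn_le_cutSize _ (singleton_nonempty _) (singleton_ne_univ _)
      _ = Fintype.card F - 1 := by rw [cutSize_singleton, unitGraphR_zmod_two_prod_degree]
  rcases le_total #W (Fintype.card F) with hcard | hcard
  · exact le_cutSize_of_card_le hF hW hcard
  · rw [← cutSize_compl]
    refine le_cutSize_of_card_le hF (nonempty_iff_ne_empty.2 (by rwa [Ne, compl_eq_empty_iff])) ?_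
    rw [card_compl, Fintype.card_prod, ZMod.card]
    omega

theorem unitGraph_ZMod_two_p_edgeConn (p : ℕ) [Fact p.Prime] (hodd : Odd p)
    [NeZero (2 * p)] :
    edgeConn (unitGraph (2 * p)) = p - 1 := by
  have hp : 3 ≤ p := by
    obtain ⟨k, rfl⟩ := hodd
    have := (Fact.out : (2 * k + 1).Prime).two_le
    omega
  have e := ZMod.chineseRemainder (Nat.coprime_two_left.2 hodd)
  have : NeZero p := ⟨by omega⟩
  calc edgeConn (unitGraph (2 * p)) = edgeConn (unitGraphR (ZMod 2 × ZMod p)) :=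
        edgeConn_congr (unitGraphRIso e)
    _ = p - 1 := by
        rw [edgeConn_unitGraphR_zmod_two_prod (by rwa [ZMod.card]), ZMod.card]
end

section
/- For an odd prime p, the binary code generated by the incidence matrix of the unit graph G(Z_{2p}) has length p(p-1), dimension 2p-1, and minimum distance p-1. -/
open SimpleGraph Finset
open scoped Classical

/-!
Reduction modulo 2 is a ring map `ℤ/2p → 𝔽₂`, so the unit graph of `ℤ/2p` is bipartite, and
translating by `v` identifies the neighbours of `v` with the `φ(2p) = p - 1` units.

Over `𝔽₂` the row space of an incidence matrix is the cut space: `x ᵥ* H` is the indicator of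
the edges leaving `{x = 1}`. Counting degrees in a vertex set `S` that meets the two sides in
`a` and `b` vertices gives `(p - 1)|S| ≤ 2ab + cut(S)`, hence `cut(S) ≥ p - 1` whenever
`0 < |S| ≤ p` and `p ≥ 3`; by complementation this holds for every nonempty proper `S`.
So the graph is connected (the kernel of `x ↦ x ᵥ* H` is spanned by the all-ones vector, giving
dimension `2p - 1`) and the lightest nonzero codeword is a row, of weight `p - 1`.
-/

open scoped Matrix

namespace SimpleGraph

variable {V : Type*} [Fintype V] (G : SimpleGraph V)

lemma cutSize_compl (S : Finset V) : cutSize G Sᶜ = cutSize G S := by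
  simp only [cutSize, mem_compl, not_not, and_comm]

lemma card_interedges_compl_eq_cutSize (S : Finset V) : #(G.interedges S Sᶜ) = cutSize G S := by
  refine card_bij (fun z _ => s(z.1, z.2)) (fun z hz => ?_) (fun z hz z' hz' h => ?_) ?_
  · obtain ⟨hu, hw, hadj⟩ := G.mem_interedges_iff.1 hz
    simp only [mem_filter, mem_edgeFinset, mem_edgeSet, Sym2.mem_iff]
    exact ⟨hadj, ⟨z.1, by simp [hu]⟩, ⟨z.2, by simpa using hw⟩⟩
  · obtain ⟨hu, -, -⟩ := G.mem_interedges_iff.1 hz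
    obtain ⟨-, hw', -⟩ := G.mem_interedges_iff.1 hz'
    rcases Sym2.eq_iff.1 h with ⟨h1, h2⟩ | ⟨h1, -⟩
    · exact Prod.ext h1 h2
    · exact absurd (h1 ▸ hu) (by simpa using hw')
  · intro e he
    induction e using Sym2.ind with
    | _ u w =>
      simp only [mem_filter, mem_edgeFinset, mem_edgeSet, Sym2.mem_iff] at he
      obtain ⟨hadj, ⟨a, ha, haS⟩, ⟨b, hb, hbS⟩⟩ := he
      rcases ha with rfl | rfl <;> rcases hb with rfl | rfl
      · exact absurd haS hbS
      · exact ⟨(a, b), G.mem_interedges_iff.2 ⟨haS, by simpa using hbS, hadj⟩, rfl⟩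
      · exact ⟨(a, b), G.mem_interedges_iff.2 ⟨haS, by simpa using hbS, hadj.symm⟩, Sym2.eq_swap⟩
      · exact absurd haS hbS

lemma sum_degree_eq_card_interedges_add_cutSize (S : Finset V) :
    ∑ v ∈ S, G.degree v = #(G.interedges S S) + cutSize G S := by
  have hsplit : G.interedges S univ = G.interedges S S ∪ G.interedges S Sᶜ := by
    ext z; simp only [mem_union, mem_interedges_iff, mem_univ, mem_compl]; tauto
  rw [← card_interedges_compl_eq_cutSize, ← card_union_of_disjoint
    (G.interedges_disjoint_right S disjoint_compl_right), ← hsplit, interedges_def,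
    card_filter, sum_product]
  refine sum_congr rfl fun v _ => ?_
  rw [← card_filter, ← neighborFinset_eq_filter, card_neighborFinset_eq_degree]

lemma cutSize_singleton (v : V) : cutSize G {v} = G.degree v := by
  have h := sum_degree_eq_card_interedges_add_cutSize G {v}
  have hloop : G.interedges {v} {v} = ∅ := by
    ext z
    simp only [mem_interedges_iff, mem_singleton, notMem_empty, iff_false]
    rintro ⟨h1, h2, hadj⟩
    exact hadj.ne (h1.trans h2.symm)
  rwa [sum_singleton, hloop, card_empty, zero_add, eq_comm] at h

lemma vecMul_incMat_apply_mk {u w : V} (huw : u ≠ w) (he : s(u, w) ∈ G.edgeFinset) (x : V → ZMod 2) :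
    (x ᵥ* incMat G) ⟨s(u, w), he⟩ = x u + x w := by
  have hmem : univ.filter (· ∈ s(u, w)) = {u, w} := by ext; simp [eq_comm]
  simp only [Matrix.vecMul, dotProduct, incMat, mul_ite, mul_one, mul_zero]
  rw [← sum_filter, hmem, sum_pair huw]

lemma vecMul_incMat_ne_zero_iff (x : V → ZMod 2) (e : G.edgeFinset) :
    (x ᵥ* incMat G) e ≠ 0 ↔ (∃ v ∈ (e : Sym2 V), x v = 1) ∧ ∃ v ∈ (e : Sym2 V), x v ≠ 1 := by
  obtain ⟨e, he⟩ := e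
  induction e using Sym2.ind with
  | _ u w =>
    have huw : u ≠ w := (G.mem_edgeSet.1 (mem_edgeFinset.1 he)).ne
    have hxor : ∀ a b : ZMod 2, a + b ≠ 0 ↔ (a = 1 ∨ b = 1) ∧ (a ≠ 1 ∨ b ≠ 1) := by decide
    simp [vecMul_incMat_apply_mk G huw he, hxor]

lemma one_vecMul_incMat : (1 : V → ZMod 2) ᵥ* incMat G = 0 := by
  funext e
  by_contra h
  simpa using ((vecMul_incMat_ne_zero_iff G 1 e).1 h).2

lemma hammingNorm_vecMul_incMat (x : V → ZMod 2) :
    hammingNorm (x ᵥ* incMat G) = cutSize G (univ.filter (x · = 1)) := by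
  refine card_bij (fun e _ => e.1) (fun e he => ?_) (fun _ _ _ _ => Subtype.ext) (fun e he => ?_)
  · simpa [vecMul_incMat_ne_zero_iff] using he
  · obtain ⟨he, hcut⟩ := mem_filter.1 he
    exact ⟨⟨e, he⟩, by simpa [vecMul_incMat_ne_zero_iff] using hcut, rfl⟩

lemma rowCode_eq_range_vecMulLinear : rowCode G = LinearMap.range (incMat G).vecMulLinear :=
  (range_vecMulLinear _).symm

variable {G}

lemma ker_vecMulLinear_incMat (hcut : ∀ S : Finset V, S.Nonempty → S ≠ univ → cutSize G S ≠ 0) :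
    LinearMap.ker (incMat G).vecMulLinear = Submodule.span (ZMod 2) {1} := by
  refine le_antisymm (fun x hx => ?_) ?_
  · have hS : cutSize G (univ.filter (x · = 1)) = 0 := by
      rw [← hammingNorm_vecMul_incMat, ← Matrix.vecMulLinear_apply, LinearMap.mem_ker.1 hx,
        hammingNorm_zero]
    have hbit : ∀ a : ZMod 2, a ≠ 1 → a = 0 := by decide
    rcases (univ.filter (x · = 1)).eq_empty_or_nonempty with h0 | hne
    · have : x = 0 := funext fun v => hbit _ (filter_eq_empty_iff.1 h0 (mem_univ v))
      exact this ▸ Submodule.zero_mem _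
    · have huniv : univ.filter (x · = 1) = univ := by_contra fun h => hcut _ hne h hS
      have : x = 1 := funext fun v => by simpa using eq_univ_iff_forall.1 huniv v
      exact this ▸ Submodule.mem_span_singleton_self _
  · rw [Submodule.span_le, Set.singleton_subset_iff, SetLike.mem_coe, LinearMap.mem_ker]
    exact one_vecMul_incMat G

lemma finrank_rowCode [Nonempty V]
    (hcut : ∀ S : Finset V, S.Nonempty → S ≠ univ → cutSize G S ≠ 0) :
    Module.finrank (ZMod 2) (rowCode G) = Fintype.card V - 1 := by
  have hrank := LinearMap.finrank_range_add_finrank_ker (incMat G).vecMulLinear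
  rw [ker_vecMulLinear_incMat hcut, finrank_span_singleton one_ne_zero,
    Module.finrank_fintype_fun_eq_card] at hrank
  rw [rowCode_eq_range_vecMulLinear]
  omega

lemma minDist_eq_edgeConn (hcut : ∀ S : Finset V, S.Nonempty → S ≠ univ → cutSize G S ≠ 0) :
    minDist G = edgeConn G := by
  unfold minDist edgeConn
  congr 1
  ext n
  constructor
  · rintro ⟨c, hc, hc0, rfl⟩
    rw [rowCode_eq_range_vecMulLinear] at hc
    obtain ⟨x, rfl⟩ := hc
    have hw := hammingNorm_vecMul_incMat G x
    refine ⟨univ.filter (x · = 1), nonempty_iff_ne_empty.2 fun h => ?_, fun h => ?_, hw⟩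
    all_goals
      rw [h] at hw
      exact hammingNorm_ne_zero_iff.2 hc0 (hw.trans (by simp [cutSize]))
  · rintro ⟨W, hne, hne', rfl⟩
    let x : V → ZMod 2 := fun v => if v ∈ W then 1 else 0
    have hW : univ.filter (x · = 1) = W := by ext v; by_cases hv : v ∈ W <;> simp [x, hv]
    have hw := hammingNorm_vecMul_incMat G x
    rw [hW] at hw
    refine ⟨x ᵥ* incMat G, ?_, fun h0 => hcut W hne hne' ?_, hw.symm⟩
    · rw [rowCode_eq_range_vecMulLinear]
      exact ⟨x, rfl⟩
    · rw [← hw, h0, hammingNorm_zero]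

end SimpleGraph

lemma two_mul_mul_add_le_mul {a b n d : ℕ} (hab : a + b ≤ n) (hn : n ≤ d + 1) (hn1 : 1 ≤ n)
    (hd : 2 ≤ d) : 2 * a * b + d ≤ n * d := by
  rcases Nat.eq_zero_or_pos a with rfl | ha
  · nlinarith
  rcases Nat.eq_zero_or_pos b with rfl | hb
  · nlinarith
  nlinarith [sq_nonneg ((a : ℤ) - b), sq_nonneg ((a : ℤ) + b - 2)]

namespace SimpleGraph.IsBipartiteWith

variable {V : Type*} {G : SimpleGraph V} {s t : Set V}

lemma card_interedges_self_le (h : G.IsBipartiteWith s t) (S : Finset V) :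
    #(G.interedges S S) ≤ 2 * #(S.filter (· ∈ s)) * #(S.filter (· ∈ t)) := by
  have hsub : G.interedges S S ⊆
      S.filter (· ∈ s) ×ˢ S.filter (· ∈ t) ∪ S.filter (· ∈ t) ×ˢ S.filter (· ∈ s) := by
    intro z hz
    obtain ⟨hu, hw, hadj⟩ := G.mem_interedges_iff.1 hz
    rcases h.mem_of_adj hadj with ⟨h1, h2⟩ | ⟨h1, h2⟩ <;> simp [hu, hw, h1, h2]
  calc #(G.interedges S S) ≤ _ := card_le_card hsub
    _ ≤ _ := card_union_le _ _
    _ = _ := by rw [card_product, card_product]; ring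

variable [Fintype V] {d : ℕ}

theorem le_cutSize (h : G.IsBipartiteWith s t) (hreg : G.IsRegularOfDegree d) (hd : 2 ≤ d)
    {S : Finset V} (hS : S.Nonempty) (hcard : #S ≤ d + 1) : d ≤ cutSize G S := by
  have hsum := sum_degree_eq_card_interedges_add_cutSize G S
  rw [sum_const_nat fun v _ => hreg.degree_eq v] at hsum
  have hparts : #(S.filter (· ∈ s)) + #(S.filter (· ∈ t)) ≤ #S := by
    rw [← card_union_of_disjoint (Finset.disjoint_left.2 fun _ hs ht =>
      Set.disjoint_left.1 h.disjoint (mem_filter.1 hs).2 (mem_filter.1 ht).2)]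
    exact card_le_card (union_subset (filter_subset _ _) (filter_subset _ _))
  have := two_mul_mul_add_le_mul hparts hcard hS.card_pos hd
  have := h.card_interedges_self_le S
  omega

theorem le_cutSize_of_ne_univ (h : G.IsBipartiteWith s t) (hreg : G.IsRegularOfDegree d)
    (hd : 2 ≤ d) (hV : Fintype.card V ≤ 2 * (d + 1)) {S : Finset V} (hS : S.Nonempty)
    (hS' : S ≠ univ) : d ≤ cutSize G S := by
  by_cases hcard : #S ≤ d + 1
  · exact h.le_cutSize hreg hd hS hcard
  · rw [← cutSize_compl]
    refine h.le_cutSize hreg hd (nonempty_iff_ne_empty.2 (by simpa using hS')) ?_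
    rw [card_compl]
    omega

theorem edgeConn_eq (h : G.IsBipartiteWith s t) (hreg : G.IsRegularOfDegree d) (hd : 2 ≤ d)
    (hV : Fintype.card V = 2 * (d + 1)) : edgeConn G = d := by
  obtain ⟨v⟩ : Nonempty V := Fintype.card_pos_iff.1 (by omega)
  have hv : ({v} : Finset V) ≠ univ := fun hv => by
    have := congrArg card hv
    rw [card_singleton, card_univ] at this
    omega
  refine le_antisymm (Nat.sInf_le ⟨{v}, singleton_nonempty v, hv, ?_⟩) (le_csInf ?_ ?_)
  · rw [cutSize_singleton, hreg.degree_eq]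
  · exact ⟨_, {v}, singleton_nonempty v, hv, rfl⟩
  · rintro _ ⟨S, hS, hS', rfl⟩
    exact h.le_cutSize_of_ne_univ hreg hd hV.le hS hS'

end SimpleGraph.IsBipartiteWith

section UnitGraph

variable {R : Type*} [CommRing R]

lemma not_isUnit_two_of_ringHom (f : R →+* ZMod 2) : ¬IsUnit (2 : R) := fun h =>
  absurd (map_ofNat f 2 ▸ h.map f) (by decide)

lemma unitGraphR_adj_iff (h2 : ¬IsUnit (2 : R)) {x y : R} :
    (unitGraphR R).Adj x y ↔ IsUnit (x + y) := by
  refine ⟨And.right, fun h => ⟨fun hxy => h2 ?_, h⟩⟩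
  rw [hxy, ← two_mul] at h
  exact isUnit_of_mul_isUnit_left h

lemma degree_unitGraphR [Fintype R] [DecidableEq R] (h2 : ¬IsUnit (2 : R)) (v : R) :
    (unitGraphR R).degree v = Fintype.card Rˣ := by
  rw [← card_neighborFinset_eq_degree, neighborFinset_eq_filter, ← card_univ]
  symm
  refine card_bij (fun u _ => (u : R) - v) (fun u _ => ?_) (fun u _ u' _ h => ?_) (fun w hw => ?_)
  · simp [unitGraphR_adj_iff h2]
  · exact Units.ext (sub_left_inj.1 h)
  · rw [mem_filter, unitGraphR_adj_iff h2] at hw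
    exact ⟨hw.2.unit, mem_univ _, by simp⟩

lemma isBipartiteWith_unitGraphR (f : R →+* ZMod 2) :
    (unitGraphR R).IsBipartiteWith {x | f x = 0} {x | f x = 1} where
  disjoint := Set.disjoint_left.2 fun x h0 h1 => by simp_all
  mem_of_adj x y hadj := by
    have hxor : ∀ a b : ZMod 2, IsUnit (a + b) → a = 0 ∧ b = 1 ∨ a = 1 ∧ b = 0 := by decide
    simpa using hxor _ _ (map_add f x y ▸ hadj.2.map f)

end UnitGraph

lemma ZMod.card_units_two_mul {p : ℕ} [Fact p.Prime] (hodd : Odd p) [NeZero (2 * p)] :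
    Fintype.card (ZMod (2 * p))ˣ = p - 1 := by
  rw [ZMod.card_units_eq_totient, Nat.totient_mul hodd.coprime_two_left, Nat.totient_two,
    Nat.totient_prime Fact.out, one_mul]

theorem unitGraph_ZMod_two_p_code_params (p : ℕ) [Fact p.Prime] (hodd : Odd p)
    [NeZero (2 * p)] :
    (unitGraph (2 * p)).edgeFinset.card = p * (p - 1) ∧
      Module.finrank (ZMod 2) (rowCode (unitGraph (2 * p))) = 2 * p - 1 ∧
      minDist (unitGraph (2 * p)) = p - 1 := by
  have hp : 3 ≤ p := by
    have := (Fact.out : p.Prime).two_le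
    rcases hodd with ⟨k, rfl⟩
    omega
  let f : ZMod (2 * p) →+* ZMod 2 := ZMod.castHom (dvd_mul_right 2 p) (ZMod 2)
  have hbip : (unitGraph (2 * p)).IsBipartiteWith _ _ := isBipartiteWith_unitGraphR f
  have hreg : (unitGraph (2 * p)).IsRegularOfDegree (p - 1) := fun v =>
    (degree_unitGraphR (not_isUnit_two_of_ringHom f) v).trans (ZMod.card_units_two_mul hodd)
  have hV : Fintype.card (ZMod (2 * p)) = 2 * (p - 1 + 1) := by rw [ZMod.card]; omega
  have hcut : ∀ S : Finset (ZMod (2 * p)), S.Nonempty → S ≠ univ →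
      cutSize (unitGraph (2 * p)) S ≠ 0 := fun S hS hS' => by
    have := hbip.le_cutSize_of_ne_univ hreg (by omega) hV.le hS hS'
    omega
  refine ⟨?_, ?_, ?_⟩
  · have h := (unitGraph (2 * p)).sum_degrees_eq_twice_card_edges
    rw [sum_const_nat fun v _ => hreg.degree_eq v, card_univ, ZMod.card] at h
    nlinarith
  · rw [finrank_rowCode hcut, ZMod.card]
  · rw [minDist_eq_edgeConn hcut, hbip.edgeConn_eq hreg (by omega) hV]
end

section
/- The binary code generated by the incidence matrix of the unit graph G(Z_6) is a [6, 5, 2] MDS code over F_2. -/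
open SimpleGraph Finset
open scoped Classical

/-!
`G(ℤ/6)` is the 6-cycle `0 - 1 - 4 - 3 - 2 - 5 - 0`. Over `𝔽₂`, a vector `x` on the vertices with
`xᵀ H = 0` must satisfy `x u = x v` along every edge, so for a connected graph the left kernel of
`H` is spanned by the all-ones vector and the code has dimension `|V| - 1 = 5`. In a 2-regular
graph every row of `H` has weight 2 and, all degrees being even, every codeword has even weight;
hence the minimum distance is 2, and `2 = 6 - 5 + 1`.
-/

theorem two_le_hammingNorm_of_sum_eq_zero {ι R : Type*} [Fintype ι] [AddCommMonoid R]
    [DecidableEq R] {c : ι → R} (hc : c ≠ 0) (hsum : ∑ i, c i = 0) : 2 ≤ hammingNorm c := by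
  by_contra! h
  have hone : hammingNorm c = 1 := by
    have := hammingNorm_pos_iff.2 hc
    omega
  obtain ⟨i, hi⟩ := Finset.card_eq_one.1 hone
  have hci : i ∈ ({j | c j ≠ 0} : Finset ι) := hi ▸ Finset.mem_singleton_self i
  rw [Finset.mem_filter] at hci
  apply hci.2
  rw [← hsum, ← Finset.sum_filter_ne_zero, hi, Finset.sum_singleton]

namespace SimpleGraph

open Matrix

lemma Preconnected.eq_of_forall_adj {V α : Type*} {G : SimpleGraph V} (hG : G.Preconnected)
    {f : V → α} (hf : ∀ u v, G.Adj u v → f u = f v) (u v : V) : f u = f v := by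
  obtain ⟨w⟩ := hG u v
  induction w with
  | nil => rfl
  | cons h _ ih => exact (hf _ _ h).trans ih

variable {V : Type*} [Fintype V] (G : SimpleGraph V)

lemma vecMul_incMat_apply (x : V → ZMod 2) {u v : V} (h : G.Adj u v) :
    (x ᵥ* incMat G) ⟨s(u, v), G.mem_edgeFinset.2 h⟩ = x u + x v := by
  simp only [Matrix.vecMul, dotProduct, incMat, mul_ite, mul_one, mul_zero, Sym2.mem_iff]
  rw [Fintype.sum_eq_add u v h.ne (fun w hw => if_neg (by tauto)), if_pos (.inl rfl),
    if_pos (.inr rfl)]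

lemma vecMul_incMat_eq_zero_iff (x : V → ZMod 2) :
    x ᵥ* incMat G = 0 ↔ ∀ u v, G.Adj u v → x u = x v := by
  constructor
  · intro hx u v h
    rw [← CharTwo.add_eq_zero, ← vecMul_incMat_apply G x h, hx, Pi.zero_apply]
  · intro hx
    funext ⟨e, he⟩
    induction e using Sym2.ind with
    | _ u v =>
      rw [vecMul_incMat_apply G x (G.mem_edgeFinset.1 he), hx u v (G.mem_edgeFinset.1 he),
        CharTwo.add_self_eq_zero, Pi.zero_apply]

variable {G}

lemma Connected.ker_vecMulLinear_incMat (hG : G.Connected) :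
    LinearMap.ker (incMat G).vecMulLinear = (ZMod 2) ∙ (1 : V → ZMod 2) := by
  ext x
  rw [LinearMap.mem_ker, vecMulLinear_apply, vecMul_incMat_eq_zero_iff,
    Submodule.mem_span_singleton]
  constructor
  · intro hx
    obtain ⟨v₀⟩ := hG.nonempty
    exact ⟨x v₀, funext fun v => by simp [hG.preconnected.eq_of_forall_adj hx v₀ v]⟩
  · rintro ⟨a, rfl⟩ u v _
    rfl

lemma Connected.finrank_rowCode (hG : G.Connected) :
    Module.finrank (ZMod 2) (rowCode G) = Fintype.card V - 1 := by
  have hrank := LinearMap.finrank_range_add_finrank_ker (incMat G).vecMulLinear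
  have : Nonempty V := hG.nonempty
  rw [range_vecMulLinear, hG.ker_vecMulLinear_incMat, finrank_span_singleton one_ne_zero,
    Module.finrank_fintype_fun_eq_card] at hrank
  rw [rowCode, ← hrank, Nat.add_sub_cancel]
  rfl

variable (G)

lemma card_filter_mem_edgeFinset (v : V) :
    #{e : G.edgeFinset | v ∈ (e : Sym2 V)} = G.degree v := by
  rw [← card_incidenceFinset_eq_degree, incidenceFinset_eq_filter, card_filter, card_filter]
  exact Finset.sum_coe_sort G.edgeFinset fun e => if v ∈ e then 1 else 0

lemma sum_incMat_row (v : V) : ∑ e, incMat G v e = G.degree v := by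
  rw [← card_filter_mem_edgeFinset, Finset.natCast_card_filter]
  rfl

lemma hammingNorm_incMat_row (v : V) : hammingNorm (incMat G v) = G.degree v := by
  rw [← card_filter_mem_edgeFinset, hammingNorm]
  congr! 2 with e
  simp [incMat]

lemma sum_eq_zero_of_mem_rowCode (heven : ∀ v, Even (G.degree v)) {c : G.edgeFinset → ZMod 2}
    (hc : c ∈ rowCode G) : ∑ e, c e = 0 := by
  induction hc using Submodule.span_induction with
  | mem c hc =>
    obtain ⟨v, rfl⟩ := hc
    rw [sum_incMat_row, (heven v).natCast_zmod_two]
  | zero => simp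
  | add c d _ _ hc hd => simp only [Pi.add_apply, Finset.sum_add_distrib, hc, hd, add_zero]
  | smul a c _ hc => simp only [Pi.smul_apply, smul_eq_mul, ← Finset.mul_sum, hc, mul_zero]

lemma IsRegularOfDegree.minDist_eq_two [Nonempty V] (hG : G.IsRegularOfDegree 2) :
    minDist G = 2 := by
  obtain ⟨v⟩ := ‹Nonempty V›
  have hrow : hammingNorm (incMat G v) = 2 := by rw [hammingNorm_incMat_row, hG.degree_eq]
  have hmem : 2 ∈ {w | ∃ c ∈ rowCode G, c ≠ 0 ∧ w = hammingNorm c} :=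
    ⟨incMat G v, Submodule.subset_span ⟨v, rfl⟩, hammingNorm_ne_zero_iff.1 (by omega), hrow.symm⟩
  refine le_antisymm (Nat.sInf_le hmem) (le_csInf ⟨2, hmem⟩ ?_)
  rintro w ⟨c, hc, hne, rfl⟩
  exact two_le_hammingNorm_of_sum_eq_zero hne
    (sum_eq_zero_of_mem_rowCode G (fun v => hG.degree_eq v ▸ even_two) hc)

end SimpleGraph

lemma isUnit_zmod_six_iff (z : ZMod 6) : IsUnit z ↔ z = 1 ∨ z = 5 := by
  rw [isUnit_iff_exists_inv]
  revert z
  decide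

lemma unitGraph_six_adj_iff (x y : ZMod 6) :
    (unitGraph 6).Adj x y ↔ x ≠ y ∧ (x + y = 1 ∨ x + y = 5) :=
  and_congr_right' (isUnit_zmod_six_iff _)

lemma neighborFinset_unitGraph_six (v : ZMod 6) :
    (unitGraph 6).neighborFinset v = {1 - v, 5 - v} := by
  ext w
  rw [mem_neighborFinset, unitGraph_six_adj_iff, mem_insert, mem_singleton]
  revert v w
  decide

lemma isRegularOfDegree_unitGraph_six : (unitGraph 6).IsRegularOfDegree 2 := fun v => by
  rw [← card_neighborFinset_eq_degree, neighborFinset_unitGraph_six, card_pair]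
  revert v
  decide

section

-- The ambient instance is classical and does not reduce; keeping this one local leaves the
-- instances in the statements below untouched.
local instance : DecidableRel (unitGraph 6).Adj := fun x y =>
  decidable_of_iff _ (unitGraph_six_adj_iff x y).symm

lemma connected_unitGraph_six : (unitGraph 6).Connected := by
  decide

end

lemma card_edgeFinset_unitGraph_six : #(unitGraph 6).edgeFinset = 6 := by
  have h := (unitGraph 6).sum_degrees_eq_twice_card_edges
  simp only [isRegularOfDegree_unitGraph_six.degree_eq, sum_const, card_univ, ZMod.card,
    smul_eq_mul] at h
  omega

theorem unitGraph_ZMod_six_code_MDS :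
    (unitGraph 6).edgeFinset.card = 6 ∧
      Module.finrank (ZMod 2) (rowCode (unitGraph 6)) = 5 ∧
      minDist (unitGraph 6) = 2 ∧
      minDist (unitGraph 6) = (unitGraph 6).edgeFinset.card -
        Module.finrank (ZMod 2) (rowCode (unitGraph 6)) + 1 := by
  have hrank : Module.finrank (ZMod 2) (rowCode (unitGraph 6)) = 5 := by
    rw [connected_unitGraph_six.finrank_rowCode, ZMod.card]
  have hdist : minDist (unitGraph 6) = 2 := isRegularOfDegree_unitGraph_six.minDist_eq_two
  exact ⟨card_edgeFinset_unitGraph_six, hrank, hdist, by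
    rw [card_edgeFinset_unitGraph_six, hrank, hdist]⟩
end
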